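/- Let G be a graph and x, y ∈ V(G) with y adjacent to x and N_G[y] ⊆ N_G[x]. Let H = G \ N_G[x] be the induced subgraph on the complement of the closed neighborhood of x. Then for each k ≥ 1 with aim(H,k) defined, aim(H,k) ≤ aim(G,k) − 1. -/

import Mathlib

/-!
Deleting `N[x]` leaves the edge `xy` with no neighbours in `H = G \ N[x]`: a neighbour of `x`
lies in `N[x]`, and a neighbour of `y` lies in `N[y] ⊆ N[x]`. So a `k`-admissible matching of `H`,
extended by `xy` as a new singleton part, is a `k`-admissible matching of `G`: the one new edge is
paid for by the one new part.
-/

open scoped Classical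

variable {V : Type*} [DecidableEq V]

/-- A matching of a hypergraph with edge set `E`: a set of pairwise disjoint edges. -/
def IsMatching (E M : Finset (Finset V)) : Prop :=
  M ⊆ E ∧ ∀ e ∈ M, ∀ f ∈ M, e ≠ f → Disjoint e f

/-- The set of vertices covered by a set of edges. -/
def verts (M : Finset (Finset V)) : Finset V := M.sup id

/-- Edge set of the induced sub-hypergraph on the vertex set `W`. -/
def inducedSub (E : Finset (Finset V)) (W : Finset V) : Finset (Finset V) :=
  E.filter (fun e => e ⊆ W)

/-- The matching number. -/
noncomputable def matchNum (E : Finset (Finset V)) : ℕ :=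
  sSup {n : ℕ | ∃ M : Finset (Finset V), IsMatching E M ∧ M.card = n}

/-- `P` is a partition of the finite set `M` into nonempty pairwise disjoint parts. -/
def IsPartitionOf (M : Finset (Finset V)) (P : Finset (Finset (Finset V))) : Prop :=
  (∀ p ∈ P, p ≠ ∅) ∧ (∀ p ∈ P, ∀ q ∈ P, p ≠ q → Disjoint p q) ∧ P.sup id = M

/-- A partition witnessing that `M` is a generalized `k`-admissible matching. -/
def GenAdmPartition (E M : Finset (Finset V)) (k : ℕ)
    (P : Finset (Finset (Finset V))) : Prop :=
  IsPartitionOf M P ∧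
  (∀ e ∈ inducedSub E (verts M), ∃ p ∈ P, e ⊆ verts p) ∧
  k ≤ M.card ∧ M.card ≤ P.card + k - 1 ∧
  ∀ p ∈ P, ∀ M' : Finset (Finset V),
    IsMatching (inducedSub E (verts p)) M' → M'.card = p.card → verts M' = verts p

/-- Generalized `k`-admissible matching. -/
def IsGenAdmissible (E M : Finset (Finset V)) (k : ℕ) : Prop :=
  IsMatching E M ∧ ∃ P, GenAdmPartition E M k P

/-- A partition witnessing that `M` is a `k`-admissible matching (d-uniform setting). -/
def AdmPartition (E M : Finset (Finset V)) (k : ℕ)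
    (P : Finset (Finset (Finset V))) : Prop :=
  IsPartitionOf M P ∧
  (∀ e ∈ inducedSub E (verts M), ∃ p ∈ P, e ⊆ verts p) ∧
  M.card ≤ P.card + k - 1

/-- `k`-admissible matching. -/
def IsAdmissible (E M : Finset (Finset V)) (k : ℕ) : Prop :=
  IsMatching E M ∧ ∃ P, AdmPartition E M k P

/-- The `k`-admissible matching number `aim(H, k)`. -/
noncomputable def aim (E : Finset (Finset V)) (k : ℕ) : ℕ :=
  sSup {n : ℕ | ∃ M : Finset (Finset V), IsAdmissible E M k ∧ M.card = n}

/-- The edges of a simple graph, as a set of `2`-element vertex subsets. -/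
noncomputable def graphEdges [Fintype V] (G : SimpleGraph V) : Finset (Finset V) :=
  Finset.univ.filter (fun s : Finset V =>
    s.card = 2 ∧ ∀ a ∈ s, ∀ b ∈ s, a ≠ b → G.Adj a b)

/-- The `k`-admissible matching number of a graph. -/
noncomputable def aimG [Fintype V] (G : SimpleGraph V) (k : ℕ) : ℕ :=
  aim (graphEdges G) k

/-- The Erey–Hibi `k`-admissible matchings: additionally each part must induce a forest. -/
def IsAdmissibleStar [Fintype V] (G : SimpleGraph V) (M : Finset (Finset V)) (k : ℕ) : Prop :=
  IsMatching (graphEdges G) M ∧ ∃ P : Finset (Finset (Finset V)),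
    AdmPartition (graphEdges G) M k P ∧
    ∀ p ∈ P, (SimpleGraph.induce (↑(verts p) : Set V) G).IsAcyclic

/-- The Erey–Hibi `k`-admissible matching number `aim*(G,k)`. -/
noncomputable def aimStar [Fintype V] (G : SimpleGraph V) (k : ℕ) : ℕ :=
  sSup {n : ℕ | ∃ M : Finset (Finset V), IsAdmissibleStar G M k ∧ M.card = n}

section Hypergraph

variable {α β : Type*}

theorem IsMatching.map {E M : Finset (Finset α)} (h : IsMatching E M) (f : α ↪ β) :
    IsMatching (E.map (Finset.mapEmbedding f).toEmbedding)
      (M.map (Finset.mapEmbedding f).toEmbedding) := by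
  refine ⟨Finset.map_subset_map.mpr h.1, ?_⟩
  simp only [Finset.forall_mem_map, RelEmbedding.coe_toEmbedding, Finset.mapEmbedding_apply,
    Finset.disjoint_map]
  exact fun e he g hg hne => h.2 e he g hg (by rintro rfl; exact hne rfl)

variable [DecidableEq α] [DecidableEq β]

theorem mem_verts {M : Finset (Finset α)} {a : α} : a ∈ verts M ↔ ∃ e ∈ M, a ∈ e := by
  simp [verts, Finset.mem_sup]

theorem subset_verts {M : Finset (Finset α)} {e : Finset α} (he : e ∈ M) : e ⊆ verts M :=
  Finset.le_sup (f := id) he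

theorem verts_subset_iff {M : Finset (Finset α)} {S : Finset α} :
    verts M ⊆ S ↔ ∀ e ∈ M, e ⊆ S :=
  Finset.sup_le_iff

theorem verts_insert (e : Finset α) (M : Finset (Finset α)) :
    verts (insert e M) = e ∪ verts M :=
  Finset.sup_insert

theorem verts_singleton (e : Finset α) : verts {e} = e :=
  Finset.sup_singleton

theorem verts_map (f : α ↪ β) (M : Finset (Finset α)) :
    verts (M.map (Finset.mapEmbedding f).toEmbedding) = (verts M).map f := by
  ext b
  simp only [mem_verts, Finset.mem_map, RelEmbedding.coe_toEmbedding, Finset.mapEmbedding_apply]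
  constructor
  · rintro ⟨_, ⟨e, he, rfl⟩, hb⟩
    obtain ⟨a, ha, rfl⟩ := Finset.mem_map.mp hb
    exact ⟨a, ⟨e, he, ha⟩, rfl⟩
  · rintro ⟨a, ⟨e, he, ha⟩, rfl⟩
    exact ⟨_, ⟨e, he, rfl⟩, Finset.mem_map_of_mem f ha⟩

theorem isAdmissible_empty {E : Finset (Finset α)} (hE : ∅ ∉ E) (k : ℕ) :
    IsAdmissible E ∅ k := by
  refine ⟨⟨Finset.empty_subset E, by simp⟩, ∅, ⟨by simp, by simp, rfl⟩, ?_, by simp⟩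
  intro e he
  obtain ⟨heE, hempty⟩ := Finset.mem_filter.mp he
  rw [Finset.subset_empty.mp hempty] at heE
  exact absurd heE hE

theorem bddAbove_admissible_cards (E : Finset (Finset α)) (k : ℕ) :
    BddAbove {n : ℕ | ∃ M, IsAdmissible E M k ∧ M.card = n} :=
  ⟨E.card, by rintro _ ⟨M, hM, rfl⟩; exact Finset.card_le_card hM.1.1⟩

theorem IsAdmissible.card_le_aim {E M : Finset (Finset α)} {k : ℕ} (hM : IsAdmissible E M k) :
    M.card ≤ aim E k :=
  le_csSup (bddAbove_admissible_cards E k) ⟨M, hM, rfl⟩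

theorem exists_isAdmissible_card_eq_aim {E : Finset (Finset α)} {k : ℕ}
    (hE : ∃ M, IsAdmissible E M k) : ∃ M, IsAdmissible E M k ∧ M.card = aim E k :=
  let ⟨M, hM⟩ := hE
  Nat.sSup_mem (s := {n | ∃ M, IsAdmissible E M k ∧ M.card = n}) ⟨_, M, hM, rfl⟩
    (bddAbove_admissible_cards E k)

theorem aim_add_le_aim {E : Finset (Finset α)} {F : Finset (Finset β)} {k d : ℕ}
    (hE : ∃ M, IsAdmissible E M k)
    (h : ∀ M, IsAdmissible E M k → ∃ N, IsAdmissible F N k ∧ M.card + d ≤ N.card) :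
    aim E k + d ≤ aim F k := by
  obtain ⟨M, hM, hMcard⟩ := exists_isAdmissible_card_eq_aim hE
  obtain ⟨N, hN, hMN⟩ := h M hM
  exact hMcard ▸ hMN.trans hN.card_le_aim

theorem IsPartitionOf.map {M : Finset (Finset α)} {P : Finset (Finset (Finset α))}
    (h : IsPartitionOf M P) (f : α ↪ β) :
    IsPartitionOf (M.map (Finset.mapEmbedding f).toEmbedding)
      (P.map (Finset.mapEmbedding (Finset.mapEmbedding f).toEmbedding).toEmbedding) := by
  refine ⟨?_, ?_, ?_⟩
  · simp only [Finset.forall_mem_map, RelEmbedding.coe_toEmbedding, Finset.mapEmbedding_apply]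
    exact fun p hp => by simpa using h.1 p hp
  · simp only [Finset.forall_mem_map, RelEmbedding.coe_toEmbedding, Finset.mapEmbedding_apply,
      Finset.disjoint_map]
    exact fun p hp q hq hne => h.2.1 p hp q hq (by rintro rfl; exact hne rfl)
  · exact (verts_map _ P).trans (congrArg _ h.2.2)

theorem IsAdmissible.map {E M : Finset (Finset α)} {k : ℕ} (h : IsAdmissible E M k)
    (f : α ↪ β) :
    IsAdmissible (E.map (Finset.mapEmbedding f).toEmbedding)
      (M.map (Finset.mapEmbedding f).toEmbedding) k := by
  obtain ⟨hM, P, hP, hcover, hcard⟩ := h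
  refine ⟨hM.map f, _, hP.map f, ?_, by simpa using hcard⟩
  simp only [inducedSub, Finset.mem_filter, Finset.mem_map, RelEmbedding.coe_toEmbedding,
    Finset.mapEmbedding_apply, verts_map]
  rintro _ ⟨⟨e, he, rfl⟩, hsub⟩
  obtain ⟨p, hp, hep⟩ := hcover e (Finset.mem_filter.mpr ⟨he, Finset.map_subset_map.mp hsub⟩)
  exact ⟨_, ⟨p, hp, rfl⟩, by simpa [verts_map] using hep⟩

theorem aim_le_aim_map {E : Finset (Finset α)} (hE : ∅ ∉ E) (f : α ↪ β) (k : ℕ) :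
    aim E k ≤ aim (E.map (Finset.mapEmbedding f).toEmbedding) k :=
  aim_add_le_aim (d := 0) ⟨∅, isAdmissible_empty hE k⟩ fun _ hM => ⟨_, hM.map f, by simp⟩

theorem IsPartitionOf.subset {M : Finset (Finset α)} {P : Finset (Finset (Finset α))}
    (h : IsPartitionOf M P) {p : Finset (Finset α)} (hp : p ∈ P) : p ⊆ M :=
  (subset_verts hp).trans h.2.2.subset

theorem IsPartitionOf.singleton_notMem {M : Finset (Finset α)} {P : Finset (Finset (Finset α))}
    (h : IsPartitionOf M P) {e : Finset α} (he : e ∉ M) : {e} ∉ P :=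
  fun hP => he (h.subset hP (Finset.mem_singleton_self e))

theorem IsPartitionOf.insert_singleton {M : Finset (Finset α)} {P : Finset (Finset (Finset α))}
    (h : IsPartitionOf M P) {e : Finset α} (he : e ∉ M) :
    IsPartitionOf (insert e M) (insert {e} P) := by
  have disjoint_singleton : ∀ q ∈ P, Disjoint {e} q :=
    fun q hq => Finset.disjoint_singleton_left.mpr fun heq => he (h.subset hq heq)
  refine ⟨?_, ?_, ?_⟩
  · simpa using h.1
  · intro p hp q hq hpq
    rw [Finset.mem_insert] at hp hq
    rcases hp with rfl | hp <;> rcases hq with rfl | hq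
    · exact absurd rfl hpq
    · exact disjoint_singleton q hq
    · exact (disjoint_singleton p hp).symm
    · exact h.2.1 p hp q hq hpq
  · rw [Finset.sup_insert, h.2.2, Finset.insert_eq]
    rfl

theorem IsAdmissible.insert_of_separated {F M : Finset (Finset α)} {S e : Finset α} {k : ℕ}
    (hk : 1 ≤ k) (hM : IsAdmissible (inducedSub F S) M k) (heF : e ∈ F) (hne : e.Nonempty)
    (heS : Disjoint e S) (hsep : ∀ g ∈ F, g ⊆ e ∪ S → g ⊆ e ∨ g ⊆ S) :
    e ∉ M ∧ IsAdmissible F (insert e M) k := by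
  obtain ⟨⟨hMF, hMdisj⟩, P, hP, hcover, hcard⟩ := hM
  have hMS : ∀ g ∈ M, g ⊆ S := fun g hg => (Finset.mem_filter.mp (hMF hg)).2
  have heM : e ∉ M := fun he =>
    hne.ne_empty (Finset.disjoint_self_iff_empty e |>.mp (heS.mono_right (hMS e he)))
  refine ⟨heM, ⟨Finset.insert_subset heF (hMF.trans (Finset.filter_subset _ _)), ?_⟩,
    insert {e} P, hP.insert_singleton heM, ?_, ?_⟩
  · intro g hg g' hg' hgg'
    rw [Finset.mem_insert] at hg hg'
    rcases hg with rfl | hg <;> rcases hg' with rfl | hg'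
    · exact absurd rfl hgg'
    · exact heS.mono_right (hMS g' hg')
    · exact (heS.mono_right (hMS g hg)).symm
    · exact hMdisj g hg g' hg' hgg'
  · intro g hg
    obtain ⟨hgF, hgsub⟩ := Finset.mem_filter.mp hg
    rw [verts_insert] at hgsub
    rcases hsep g hgF (hgsub.trans (Finset.union_subset_union_right (verts_subset_iff.mpr hMS)))
      with hge | hgS
    · exact ⟨{e}, Finset.mem_insert_self _ _, by rwa [verts_singleton]⟩
    · have hgM : g ⊆ verts M := fun a ha =>
        (Finset.mem_union.mp (hgsub ha)).resolve_left (Finset.disjoint_right.mp heS (hgS ha))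
      obtain ⟨p, hp, hgp⟩ := hcover g (by simp [inducedSub, hgF, hgS, hgM])
      exact ⟨p, Finset.mem_insert_of_mem hp, hgp⟩
  · rw [Finset.card_insert_of_notMem heM, Finset.card_insert_of_notMem (hP.singleton_notMem heM)]
    omega

theorem aim_inducedSub_add_one_le {F : Finset (Finset α)} {S e : Finset α} {k : ℕ} (hk : 1 ≤ k)
    (hF : ∅ ∉ F) (heF : e ∈ F) (heS : Disjoint e S)
    (hsep : ∀ g ∈ F, g ⊆ e ∪ S → g ⊆ e ∨ g ⊆ S) :
    aim (inducedSub F S) k + 1 ≤ aim F k := by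
  have hne : e.Nonempty := Finset.nonempty_iff_ne_empty.mpr fun h => hF (h ▸ heF)
  refine aim_add_le_aim ⟨∅, isAdmissible_empty (fun h => hF (Finset.mem_filter.mp h).1) k⟩ ?_
  intro M hM
  obtain ⟨heM, hadm⟩ := hM.insert_of_separated hk heF hne heS hsep
  exact ⟨_, hadm, (Finset.card_insert_of_notMem heM).ge⟩

end Hypergraph

section Graph

variable {α : Type*} [DecidableEq α] [Fintype α] (G : SimpleGraph α)

theorem empty_notMem_graphEdges : ∅ ∉ graphEdges G := by
  simp [graphEdges]

theorem pair_mem_graphEdges {a b : α} (h : G.Adj a b) : {a, b} ∈ graphEdges G := by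
  simp [graphEdges, Finset.card_pair h.ne, h, h.symm]

theorem graphEdges_separated {e S : Finset α} (h : ∀ a ∈ e, ∀ b ∈ S, ¬ G.Adj a b) :
    ∀ g ∈ graphEdges G, g ⊆ e ∪ S → g ⊆ e ∨ g ⊆ S := by
  intro g hg hgsub
  by_contra! hcon
  obtain ⟨b, hbg, hbe⟩ := Finset.not_subset.mp hcon.1
  obtain ⟨a, hag, haS⟩ := Finset.not_subset.mp hcon.2
  have hae : a ∈ e := (Finset.mem_union.mp (hgsub hag)).resolve_right haS
  have hbS : b ∈ S := (Finset.mem_union.mp (hgsub hbg)).resolve_left hbe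
  exact h a hae b hbS ((Finset.mem_filter.mp hg).2.2 a hag b hbg (by rintro rfl; exact haS hbS))

theorem map_graphEdges_induce (s : Set α) [Fintype s] :
    (graphEdges (G.induce s)).map
        (Finset.mapEmbedding (Function.Embedding.subtype (· ∈ s))).toEmbedding =
      inducedSub (graphEdges G) s.toFinset := by
  ext g
  simp only [Finset.mem_map, inducedSub, Finset.mem_filter, graphEdges, Finset.mem_univ, true_and,
    RelEmbedding.coe_toEmbedding, Finset.mapEmbedding_apply]
  constructor
  · rintro ⟨e, ⟨hcard, hadj⟩, rfl⟩
    refine ⟨⟨by simpa using hcard, ?_⟩, ?_⟩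
    · simp only [Finset.mem_map, Function.Embedding.coe_subtype]
      rintro _ ⟨a, ha, rfl⟩ _ ⟨b, hb, rfl⟩ hab
      exact hadj a ha b hb (by rintro rfl; exact hab rfl)
    · intro a ha
      obtain ⟨a, -, rfl⟩ := Finset.mem_map.mp ha
      exact Set.mem_toFinset.mpr a.2
  · rintro ⟨⟨hcard, hadj⟩, hsub⟩
    have hmap := Finset.subtype_map_of_mem fun a ha => Set.mem_toFinset.mp (hsub ha)
    refine ⟨g.subtype (· ∈ s), ⟨?_, ?_⟩, hmap⟩
    · rwa [← Finset.card_map, hmap]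
    · intro a ha b hb hab
      exact hadj a (Finset.mem_subtype.mp ha) b (Finset.mem_subtype.mp hb)
        (Subtype.coe_injective.ne hab)

end Graph

/-- If `y` is adjacent to `x` and `N[y] ⊆ N[x]`, then for the induced subgraph `H` of `G`
on the complement of `N[x]` one has `aim(H,k) + 1 ≤ aim(G,k)`, i.e. `aim(H,k) ≤ aim(G,k) - 1`. -/
theorem aim_deleteClosedNbhd [Fintype V] (G : SimpleGraph V) (x y : V)
    (hxy : G.Adj x y)
    (hsub : insert y (G.neighborSet y) ⊆ insert x (G.neighborSet x))
    (k : ℕ) (hk : 1 ≤ k) :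
    aimG (SimpleGraph.induce ((insert x (G.neighborSet x))ᶜ : Set V) G) k + 1
      ≤ aimG G k := by
  set N := insert x (G.neighborSet x)
  have hfar : ∀ a ∈ ({x, y} : Finset V), ∀ b ∈ Nᶜ.toFinset, ¬ G.Adj a b := by
    simp only [Finset.mem_insert, Finset.mem_singleton, Set.mem_toFinset, Set.mem_compl_iff]
    rintro a (rfl | rfl) b hb hab
    · exact hb (Set.mem_insert_of_mem _ hab)
    · exact hb (hsub (Set.mem_insert_of_mem _ hab))
  have hxyN : Disjoint ({x, y} : Finset V) Nᶜ.toFinset := by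
    simp [N, hxy]
  calc aimG (G.induce Nᶜ) k + 1
      ≤ aim ((graphEdges (G.induce Nᶜ)).map
          (Finset.mapEmbedding (Function.Embedding.subtype (· ∈ Nᶜ))).toEmbedding) k + 1 :=
        Nat.add_le_add_right (aim_le_aim_map (empty_notMem_graphEdges _) _ k) 1
    _ = aim (inducedSub (graphEdges G) Nᶜ.toFinset) k + 1 := by rw [map_graphEdges_induce]
    _ ≤ aimG G k := aim_inducedSub_add_one_le hk (empty_notMem_graphEdges G)
        (pair_mem_graphEdges G hxy) hxyN (graphEdges_separated G hfar)
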